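/- Let B have the c-beta-Riesz type I density proportional to |B|^{(n−m+1)/2−1}|I_m − B|^{(ν−m+1)/2−1} q_κ(I_m − B) q_τ(B) on 0 < B < I_m, and let Θ = u(Θ)^T u(Θ) be the Cholesky decomposition of a positive definite m×m matrix Θ. Then C = u(Θ)^T B u(Θ) has density equal to B_m[ν/2,κ; n/2,τ]^{−1}·|Θ|^{−((ν+n−m+1)/2−1)}·q_{κ+τ}(Θ)^{−1}·|C|^{(n−m+1)/2−1}·|Θ − C|^{(ν−m+1)/2−1}·q_κ(Θ − C)·q_τ(C) on the set where C and Θ − C are positive definite. -/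

import Mathlib

open MeasureTheory ProbabilityTheory Matrix BigOperators Real

noncomputable section

/-- Determinant of the leading `p × p` principal submatrix. -/
def leadDet {m : ℕ} (A : Matrix (Fin m) (Fin m) ℝ) (p : ℕ) (h : p ≤ m) : ℝ :=
  (A.submatrix (fun i : Fin p => Fin.castLE h i) (fun i : Fin p => Fin.castLE h i)).det

/-- Generalized power `q_κ(A) = |A_m|^{k_m} ∏_{i<m} |A_i|^{k_i - k_{i+1}}`. -/
def qpow {m : ℕ} (κ : Fin m → ℝ) (A : Matrix (Fin m) (Fin m) ℝ) : ℝ :=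
  ∏ i : Fin m, leadDet A ((i : ℕ) + 1) i.isLt ^
    (κ i - if h : (i : ℕ) + 1 < m then κ ⟨(i : ℕ) + 1, h⟩ else 0)

/-- Index set of the independent entries of a symmetric `m × m` matrix. -/
abbrev SymIdx (m : ℕ) := {p : Fin m × Fin m // p.1 ≤ p.2}

/-- Symmetric matrix built from its independent (upper triangular) entries. -/
def symOf {m : ℕ} (x : SymIdx m → ℝ) : Matrix (Fin m) (Fin m) ℝ :=
  Matrix.of fun i j => if h : i ≤ j then x ⟨(i, j), h⟩ else x ⟨(j, i), le_of_not_ge h⟩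

/-- Generalized gamma function of weight κ (closed form). -/
def Gm (m : ℕ) (a : ℝ) (κ : Fin m → ℝ) : ℝ :=
  π ^ ((m : ℝ) * ((m : ℝ) - 1) / 4) *
    ∏ i : Fin m, Real.Gamma (a + κ i - ((i : ℕ) : ℝ) / 2)

/-- Generalized c-beta function `B_m[a,κ;b,τ]`. -/
def Bm (m : ℕ) (a : ℝ) (κ : Fin m → ℝ) (b : ℝ) (τ : Fin m → ℝ) : ℝ :=
  Gm m a κ * Gm m b τ / Gm m (a + b) (κ + τ)

/-- Riesz type I density (β = 1, identity scale) with parameters `(a, κ)`. -/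
def rieszDens (m : ℕ) (a : ℝ) (κ : Fin m → ℝ) (x : SymIdx m → ℝ) : ℝ :=
  Set.indicator {x : SymIdx m → ℝ | (symOf x).PosDef}
    (fun x => Real.exp (-(symOf x).trace) * (symOf x).det ^ (a - ((m : ℝ) + 1) / 2) *
      qpow κ (symOf x) / Gm m a κ) x

/-- Kotz-Riesz type I density (β = 1, identity parameters) with weight τ. -/
def kotzRieszDens (n m : ℕ) (τ : Fin m → ℝ) (f : Fin n → Fin m → ℝ) : ℝ :=
  Gm m ((n : ℝ) / 2) (fun _ => 0) /
      (π ^ ((m : ℝ) * (n : ℝ) / 2) * Gm m ((n : ℝ) / 2) τ) *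
    Real.exp (-((Matrix.of f)ᵀ * Matrix.of f).trace) *
    qpow τ ((Matrix.of f)ᵀ * Matrix.of f)

/-- Matricvariate Pearson type II-Riesz type I density. -/
def pearsonDens (n m : ℕ) (ν : ℝ) (κ τ : Fin m → ℝ) (f : Fin n → Fin m → ℝ) : ℝ :=
  Set.indicator {f : Fin n → Fin m → ℝ | (1 - (Matrix.of f)ᵀ * Matrix.of f).PosDef}
    (fun f =>
      Gm m ((n : ℝ) / 2) (fun _ => 0) /
          (π ^ ((m : ℝ) * (n : ℝ) / 2) * Bm m (ν / 2) κ ((n : ℝ) / 2) τ) *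
        (1 - (Matrix.of f)ᵀ * Matrix.of f).det ^ ((ν - (m : ℝ) + 1) / 2 - 1) *
        qpow κ (1 - (Matrix.of f)ᵀ * Matrix.of f) *
        qpow τ ((Matrix.of f)ᵀ * Matrix.of f)) f

/-- Matricvariate c-beta-Riesz type I density. -/
def cbetaDens (m : ℕ) (ν n : ℝ) (κ τ : Fin m → ℝ) (x : SymIdx m → ℝ) : ℝ :=
  Set.indicator {x : SymIdx m → ℝ | (symOf x).PosDef ∧ (1 - symOf x).PosDef}
    (fun x =>
      (symOf x).det ^ ((n - (m : ℝ) + 1) / 2 - 1) *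
        (1 - symOf x).det ^ ((ν - (m : ℝ) + 1) / 2 - 1) *
        qpow κ (1 - symOf x) * qpow τ (symOf x) / Bm m (ν / 2) κ (n / 2) τ) x

/-!
The map `X ↦ uᵀ X u` is linear on symmetric matrices. Ordering the entries `(i, j)`, `i ≤ j`,
lexicographically makes its matrix triangular with diagonal `u i i * u j j`, so its Jacobian is
`|u|^(m+1) = |Θ|^((m+1)/2)`, and `C` has density `|Θ|^(-(m+1)/2)` times the density of `B` at
`u⁻ᵀ C u⁻¹`. Since `u⁻¹` is upper triangular, the leading minors of `u⁻ᵀ A u⁻¹` are those of `A`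
times those of `u⁻ᵀ u⁻¹ = Θ⁻¹`; hence `|B| = |C| / |Θ|`, `I - B = u⁻ᵀ (Θ - C) u⁻¹`,
`q_κ(I - B) = q_κ(Θ - C) / q_κ(Θ)` and `q_τ(B) = q_τ(C) / q_τ(Θ)`, and it remains to collect the
powers of `|Θ|`.
-/

theorem Matrix.BlockTriangular.det_of_injective {ι α R : Type*} [Fintype ι] [DecidableEq ι]
    [CommRing R] [LinearOrder α] {M : Matrix ι ι R} {b : ι → α} (hM : M.BlockTriangular b)
    (hb : Function.Injective b) : M.det = ∏ i, M i i := by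
  classical
  rw [hM.det, Finset.prod_image hb.injOn]
  refine Finset.prod_congr rfl fun i _ => ?_
  have : Subsingleton {j // b j = b i} := ⟨fun j k => Subtype.ext (hb (j.2.trans k.2.symm))⟩
  exact Matrix.det_eq_elem_of_subsingleton _ (⟨i, rfl⟩ : {j // b j = b i})

lemma transpose_mul_single_mul_apply {n R : Type*} [Fintype n] [DecidableEq n] [Semiring R]
    (w : Matrix n n R) (a b i j : n) :
    (wᵀ * Matrix.single a b (1 : R) * w) i j = w a i * w b j := by
  simp [Matrix.mul_apply, Matrix.single_apply, ite_and]

theorem MeasurableEquiv.map_withDensity {α β : Type*} [MeasurableSpace α] [MeasurableSpace β]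
    (e : α ≃ᵐ β) (μ : Measure α) (f : α → ENNReal) :
    (μ.withDensity f).map e = (μ.map e).withDensity (f ∘ e.symm) := by
  ext s hs
  rw [e.map_apply, withDensity_apply _ (e.measurable hs), withDensity_apply _ hs, e.restrict_map,
    lintegral_map_equiv]
  simp

theorem map_linearEquiv_withDensity {E : Type*} [NormedAddCommGroup E] [NormedSpace ℝ E]
    [MeasurableSpace E] [BorelSpace E] [FiniteDimensional ℝ E] (μ : Measure E)
    [μ.IsAddHaarMeasure] (e : E ≃ₗ[ℝ] E) (f : E → ENNReal) :
    (μ.withDensity f).map e =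
      μ.withDensity fun y => ENNReal.ofReal |LinearMap.det (e : E →ₗ[ℝ] E)|⁻¹ * f (e.symm y) := by
  have hdet : LinearMap.det (e : E →ₗ[ℝ] E) ≠ 0 := (LinearEquiv.isUnit_det' e).ne_zero
  rw [← abs_inv]
  calc (μ.withDensity f).map e
      = (μ.map e).withDensity (f ∘ e.symm) :=
        e.toContinuousLinearEquiv.toHomeomorph.toMeasurableEquiv.map_withDensity μ f
    _ = _ := by
        rw [← LinearEquiv.coe_coe, Measure.map_linearMap_addHaar_eq_smul_addHaar μ hdet,
          withDensity_smul_measure, ← withDensity_smul' _ _ ENNReal.ofReal_ne_top]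
        rfl

section SymmetricMatrices

variable {m : ℕ}

theorem prod_symIdx_mul {M : Type*} [CommMonoid M] (f : Fin m → M) :
    ∏ p : SymIdx m, f p.1.1 * f p.1.2 = (∏ i, f i) ^ (m + 1) := by
  classical
  set S := Finset.univ.filter fun p : Fin m × Fin m => p.1 ≤ p.2
  set S' := Finset.univ.filter fun p : Fin m × Fin m => p.2 ≤ p.1
  have hswap : ∏ p ∈ S, f p.2 = ∏ p ∈ S', f p.1 :=
    Finset.prod_nbij' Prod.swap Prod.swap (by simp [S, S']) (by simp [S, S']) (by simp)
      (by simp) (by simp)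
  have hunion : S ∪ S' = Finset.univ := by ext p; simp [S, S', le_total]
  have hinter : S ∩ S' = (Finset.univ : Finset (Fin m)).diag := by
    ext p; simp [S, S', le_antisymm_iff]
  calc ∏ p : SymIdx m, f p.1.1 * f p.1.2
      = (∏ p ∈ S, f p.1) * ∏ p ∈ S', f p.1 := by
        rw [← hswap, ← Finset.prod_mul_distrib,
          Finset.prod_subtype (p := fun q : Fin m × Fin m => q.1 ≤ q.2) S (fun p => by simp [S])
            fun p => f p.1 * f p.2]
    _ = (∏ p : Fin m × Fin m, f p.1) * ∏ p ∈ (Finset.univ : Finset (Fin m)).diag, f p.1 := by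
        rw [← Finset.prod_union_inter, hunion, hinter]
    _ = (∏ i, f i) ^ (m + 1) := by
        rw [Fintype.prod_prod_type, Finset.diag, Finset.prod_map]
        simp [pow_succ, Finset.prod_pow]

lemma symOf_add (x y : SymIdx m → ℝ) : symOf (x + y) = symOf x + symOf y := by
  ext i j; simp only [symOf, of_apply, Pi.add_apply, Matrix.add_apply]; split_ifs <;> rfl

lemma symOf_smul (c : ℝ) (x : SymIdx m → ℝ) : symOf (c • x) = c • symOf x := by
  ext i j; simp only [symOf, of_apply, Pi.smul_apply, Matrix.smul_apply]; split_ifs <;> rfl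

lemma symOf_transpose (x : SymIdx m → ℝ) : (symOf x)ᵀ = symOf x := by
  ext i j
  simp only [symOf, transpose_apply, of_apply]
  rcases lt_trichotomy i j with h | rfl | h
  · simp [h.le, not_le.2 h]
  · rfl
  · simp [h.le, not_le.2 h]

lemma symOf_single (q : SymIdx m) :
    symOf (Pi.single q 1) = Matrix.single q.1.1 q.1.2 (1 : ℝ) +
      if q.1.1 = q.1.2 then 0 else Matrix.single q.1.2 q.1.1 1 := by
  ext k l
  obtain ⟨⟨a, b⟩, hab : a ≤ b⟩ := q
  by_cases hd : a = b <;>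
  simp only [hd, if_true, if_false, symOf, of_apply, Pi.single_apply, Matrix.add_apply,
    Matrix.single_apply, Subtype.ext_iff, Prod.ext_iff, Matrix.zero_apply] <;> split_ifs <;> grind

def symCongr (w : Matrix (Fin m) (Fin m) ℝ) : (SymIdx m → ℝ) →ₗ[ℝ] SymIdx m → ℝ where
  toFun x p := (wᵀ * symOf x * w) p.1.1 p.1.2
  map_add' x y := by ext p; simp [symOf_add, Matrix.mul_add, Matrix.add_mul]
  map_smul' c x := by ext p; simp [symOf_smul]

lemma symOf_symCongr (w : Matrix (Fin m) (Fin m) ℝ) (x : SymIdx m → ℝ) :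
    symOf (symCongr w x) = wᵀ * symOf x * w := by
  have hsymm : (wᵀ * symOf x * w)ᵀ = wᵀ * symOf x * w := by
    rw [transpose_mul, transpose_mul, transpose_transpose, symOf_transpose, mul_assoc]
  ext i j
  simp only [symOf, of_apply]
  split_ifs
  · rfl
  · exact congr_fun (congr_fun hsymm i) j

lemma symCongr_comp (w w' : Matrix (Fin m) (Fin m) ℝ) :
    (symCongr w).comp (symCongr w') = symCongr (w' * w) := by
  refine LinearMap.ext fun x => funext fun p => ?_
  change (wᵀ * symOf (symCongr w' x) * w) _ _ = ((w' * w)ᵀ * symOf x * (w' * w)) _ _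
  rw [symOf_symCongr, transpose_mul]
  simp only [mul_assoc]

lemma symCongr_one : symCongr (1 : Matrix (Fin m) (Fin m) ℝ) = LinearMap.id := by
  ext x p
  simp [symCongr, symOf, p.2]

def symCongrEquiv (w : Matrix (Fin m) (Fin m) ℝ) (hw : IsUnit w.det) :
    (SymIdx m → ℝ) ≃ₗ[ℝ] SymIdx m → ℝ :=
  LinearEquiv.ofLinearMap (symCongr w) (symCongr w⁻¹)
    (by rw [symCongr_comp, nonsing_inv_mul _ hw, symCongr_one])
    (by rw [symCongr_comp, mul_nonsing_inv _ hw, symCongr_one])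

lemma toMatrix'_symCongr_apply (w : Matrix (Fin m) (Fin m) ℝ) (p q : SymIdx m) :
    LinearMap.toMatrix' (symCongr w) p q =
      w q.1.1 p.1.1 * w q.1.2 p.1.2 +
        if q.1.1 = q.1.2 then 0 else w q.1.2 p.1.1 * w q.1.1 p.1.2 := by
  rw [LinearMap.toMatrix'_apply]
  change (wᵀ * symOf (Pi.single q 1) * w) p.1.1 p.1.2 = _
  rw [symOf_single]
  split_ifs <;> simp [Matrix.mul_add, Matrix.add_mul, transpose_mul_single_mul_apply]

lemma blockTriangular_toMatrix'_symCongr {w : Matrix (Fin m) (Fin m) ℝ}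
    (hw : w.BlockTriangular id) :
    (LinearMap.toMatrix' (symCongr w))ᵀ.BlockTriangular fun p => toLex p.1 := by
  intro q p hpq
  have hle : ∀ {i j : Fin m}, i ≤ p.1.1 → j ≤ p.1.2 → ¬ toLex p.1 < toLex (i, j) :=
    fun hi hj => not_lt.2 (Prod.Lex.toLex_mono ⟨hi, hj⟩)
  have hw' : ∀ {i j : Fin m}, w i j ≠ 0 → i ≤ j := fun h => not_lt.1 fun hlt => h (hw hlt)
  have h₁ : w q.1.1 p.1.1 * w q.1.2 p.1.2 = 0 := by
    by_contra h
    obtain ⟨h₁, h₂⟩ := mul_ne_zero_iff.1 h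
    exact hle (hw' h₁) (hw' h₂) hpq
  have h₂ : w q.1.2 p.1.1 * w q.1.1 p.1.2 = 0 := by
    by_contra h
    have h₁ := hw' (left_ne_zero_of_mul h)
    exact hle (q.2.trans h₁) (h₁.trans p.2) hpq
  rw [transpose_apply, toMatrix'_symCongr_apply, h₁, h₂]
  simp

theorem det_symCongr {w : Matrix (Fin m) (Fin m) ℝ} (hw : w.BlockTriangular id) :
    LinearMap.det (symCongr w) = w.det ^ (m + 1) := by
  rw [← LinearMap.det_toMatrix', ← Matrix.det_transpose,
    (blockTriangular_toMatrix'_symCongr hw).det_of_injective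
      (toLex.injective.comp Subtype.val_injective), Matrix.det_of_isUpperTriangular hw,
    ← prod_symIdx_mul]
  refine Finset.prod_congr rfl fun p _ => ?_
  rw [transpose_apply, toMatrix'_symCongr_apply]
  rcases p.2.eq_or_lt with h | h
  · simp [h]
  · simp [h.ne, hw h]

lemma abs_det_symCongr {u : Matrix (Fin m) (Fin m) ℝ} (hu : u.BlockTriangular id) :
    |LinearMap.det (symCongr u)| = (uᵀ * u).det ^ (((m : ℝ) + 1) / 2) := by
  rw [det_symCongr hu, det_mul, det_transpose, ← abs_mul_abs_self, abs_pow, ← sq,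
    ← rpow_natCast, ← rpow_natCast, ← rpow_mul (abs_nonneg _)]
  congr 1
  push_cast
  ring

end SymmetricMatrices

section LeadingMinors

variable {m : ℕ}

lemma submatrix_castLE_mul_of_blockTriangular {R : Type*} [NonUnitalNonAssocSemiring R]
    {p : ℕ} (h : p ≤ m) (A w : Matrix (Fin m) (Fin m) R) (hw : w.BlockTriangular id) :
    (A * w).submatrix (Fin.castLE h) (Fin.castLE h) =
      A.submatrix (Fin.castLE h) (Fin.castLE h) * w.submatrix (Fin.castLE h) (Fin.castLE h) := by
  ext i j
  simp only [submatrix_apply, mul_apply]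
  rw [← Finset.sum_subset (Finset.subset_univ (Finset.univ.map (Fin.castLEEmb h))),
    Finset.sum_map]
  · rfl
  · intro k _ hk
    have hjk : Fin.castLE h j < k := by
      by_contra hkj
      exact hk (Finset.mem_map.2
        ⟨⟨k, (Fin.le_iff_val_le_val.1 (not_lt.1 hkj)).trans_lt j.2⟩, Finset.mem_univ _, rfl⟩)
    exact mul_eq_zero_of_right _ (hw hjk)

lemma submatrix_castLE_transpose_mul_of_blockTriangular {R : Type*} [CommSemiring R] {p : ℕ}
    (h : p ≤ m) (A w : Matrix (Fin m) (Fin m) R) (hw : w.BlockTriangular id) :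
    (wᵀ * A).submatrix (Fin.castLE h) (Fin.castLE h) =
      (w.submatrix (Fin.castLE h) (Fin.castLE h))ᵀ * A.submatrix (Fin.castLE h) (Fin.castLE h) := by
  simpa [transpose_mul, transpose_submatrix] using
    congrArg transpose (submatrix_castLE_mul_of_blockTriangular h Aᵀ w hw)

lemma leadDet_eq {A : Matrix (Fin m) (Fin m) ℝ} {p : ℕ} (h : p ≤ m) :
    leadDet A p h = (A.submatrix (Fin.castLE h) (Fin.castLE h)).det := rfl

lemma leadDet_one {p : ℕ} (h : p ≤ m) : leadDet (1 : Matrix (Fin m) (Fin m) ℝ) p h = 1 := by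
  rw [leadDet_eq, submatrix_one _ (Fin.castLE_injective h), det_one]

lemma leadDet_transpose_mul_mul {w : Matrix (Fin m) (Fin m) ℝ} (hw : w.BlockTriangular id)
    (A : Matrix (Fin m) (Fin m) ℝ) {p : ℕ} (h : p ≤ m) :
    leadDet (wᵀ * A * w) p h = leadDet (wᵀ * w) p h * leadDet A p h := by
  have key : ∀ B : Matrix (Fin m) (Fin m) ℝ, leadDet (wᵀ * B * w) p h =
      (w.submatrix (Fin.castLE h) (Fin.castLE h)).det ^ 2 * leadDet B p h := fun B => by
    rw [leadDet_eq, leadDet_eq, submatrix_castLE_mul_of_blockTriangular h _ _ hw,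
      submatrix_castLE_transpose_mul_of_blockTriangular h _ _ hw, det_mul, det_mul, det_transpose]
    ring
  have hgram := key 1
  rw [mul_one, leadDet_one, mul_one] at hgram
  rw [key, hgram]

lemma leadDet_nonneg {A : Matrix (Fin m) (Fin m) ℝ} (hA : A.PosSemidef) {p : ℕ} (h : p ≤ m) :
    0 ≤ leadDet A p h :=
  (hA.submatrix _).det_nonneg

lemma leadDet_pos {A : Matrix (Fin m) (Fin m) ℝ} (hA : A.PosDef) {p : ℕ} (h : p ≤ m) :
    0 < leadDet A p h :=
  (hA.submatrix (Fin.castLE_injective h)).det_pos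

lemma qpow_one (κ : Fin m → ℝ) : qpow κ (1 : Matrix (Fin m) (Fin m) ℝ) = 1 := by
  simp [qpow, leadDet_one]

lemma qpow_add {A : Matrix (Fin m) (Fin m) ℝ} (hA : A.PosDef) (κ τ : Fin m → ℝ) :
    qpow (κ + τ) A = qpow κ A * qpow τ A := by
  simp only [qpow, ← Finset.prod_mul_distrib, ← rpow_add (leadDet_pos hA _), Pi.add_apply]
  refine Finset.prod_congr rfl fun i _ => ?_
  split_ifs <;> ring_nf

lemma qpow_transpose_mul_mul {w : Matrix (Fin m) (Fin m) ℝ} (hw : w.BlockTriangular id)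
    {A : Matrix (Fin m) (Fin m) ℝ} (hA : A.PosSemidef) (κ : Fin m → ℝ) :
    qpow κ (wᵀ * A * w) = qpow κ (wᵀ * w) * qpow κ A := by
  simp only [qpow, ← Finset.prod_mul_distrib]
  refine Finset.prod_congr rfl fun i _ => ?_
  rw [leadDet_transpose_mul_mul hw, mul_rpow _ (leadDet_nonneg hA _)]
  simpa using leadDet_nonneg (PosSemidef.one.conjTranspose_mul_mul_same w) i.isLt

end LeadingMinors

def scaledCbetaDens (m : ℕ) (ν n : ℝ) (κ τ : Fin m → ℝ) (Θ : Matrix (Fin m) (Fin m) ℝ)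
    (x : SymIdx m → ℝ) : ℝ :=
  Set.indicator {x : SymIdx m → ℝ | (symOf x).PosDef ∧ (Θ - symOf x).PosDef}
    (fun x =>
      (Bm m (ν / 2) κ (n / 2) τ)⁻¹ * Θ.det ^ (-((ν + n - (m : ℝ) + 1) / 2 - 1)) *
        (qpow (κ + τ) Θ)⁻¹ * (symOf x).det ^ ((n - (m : ℝ) + 1) / 2 - 1) *
        (Θ - symOf x).det ^ ((ν - (m : ℝ) + 1) / 2 - 1) * qpow κ (Θ - symOf x) *
        qpow τ (symOf x)) x

lemma isUnit_det_of_posDef_transpose_mul_self {m : ℕ} {u : Matrix (Fin m) (Fin m) ℝ}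
    (hΘ : (uᵀ * u).PosDef) : IsUnit u.det :=
  isUnit_iff_ne_zero.2 fun h => hΘ.det_pos.ne' (by simp [det_mul, h])

lemma transpose_inv_mul_gram_mul_inv {m : ℕ} {u : Matrix (Fin m) (Fin m) ℝ}
    (hu : IsUnit u.det) :
    (u⁻¹)ᵀ * (uᵀ * u) * u⁻¹ = 1 := by
  rw [show (u⁻¹)ᵀ * (uᵀ * u) * u⁻¹ = (u * u⁻¹)ᵀ * (u * u⁻¹) by
      simp only [transpose_mul, mul_assoc],
    mul_nonsing_inv _ hu, transpose_one, one_mul]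

lemma det_transpose_mul_mul {m : ℕ} (w A : Matrix (Fin m) (Fin m) ℝ) :
    (wᵀ * A * w).det = (wᵀ * w).det * A.det := by
  simp only [det_mul]
  ring

lemma cbetaDens_symCongr_inv {m : ℕ} {u : Matrix (Fin m) (Fin m) ℝ} (hu : u.BlockTriangular id)
    (hΘ : (uᵀ * u).PosDef) (ν n : ℝ) (κ τ : Fin m → ℝ) (y : SymIdx m → ℝ) :
    cbetaDens m ν n κ τ (symCongr u⁻¹ y) =
      (uᵀ * u).det ^ (((m : ℝ) + 1) / 2) * scaledCbetaDens m ν n κ τ (uᵀ * u) y := by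
  have hu_det := isUnit_det_of_posDef_transpose_mul_self hΘ
  set Θ := uᵀ * u
  set C := symOf y
  set w := u⁻¹
  have hw : w.BlockTriangular id := by
    have := u.invertibleOfIsUnitDet hu_det
    exact blockTriangular_inv_of_blockTriangular hu
  have hwΘ : wᵀ * Θ * w = 1 := transpose_inv_mul_gram_mul_inv hu_det
  have hposDef : ∀ A : Matrix (Fin m) (Fin m) ℝ, (wᵀ * A * w).PosDef ↔ A.PosDef := fun A => by
    simpa [star_eq_conjTranspose] using IsUnit.posDef_star_left_conjugate_iff (x := A)
      ((isUnit_iff_isUnit_det w).2 (isUnit_nonsing_inv_det _ hu_det))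
  have hgram_det : (wᵀ * w).det = Θ.det⁻¹ :=
    eq_inv_of_mul_eq_one_left (by rw [← det_transpose_mul_mul, hwΘ, det_one])
  have hgram_qpow : ∀ κ : Fin m → ℝ, qpow κ (wᵀ * w) = (qpow κ Θ)⁻¹ := fun κ =>
    eq_inv_of_mul_eq_one_left (by rw [← qpow_transpose_mul_mul hw hΘ.posSemidef, hwΘ, qpow_one])
  have hX : symOf (symCongr w y) = wᵀ * C * w := symOf_symCongr w y
  have hcompl : 1 - wᵀ * C * w = wᵀ * (Θ - C) * w := by rw [mul_sub, sub_mul, hwΘ]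
  unfold cbetaDens scaledCbetaDens
  by_cases hy : C.PosDef ∧ (Θ - C).PosDef
  · rw [Set.indicator_of_mem (show symCongr w y ∈ _ by simpa [hX, hcompl, hposDef] using hy),
      Set.indicator_of_mem (show y ∈ _ from hy)]
    have hD := hΘ.det_pos
    rw [hX, hcompl, det_transpose_mul_mul, det_transpose_mul_mul,
      qpow_transpose_mul_mul hw hy.1.posSemidef, qpow_transpose_mul_mul hw hy.2.posSemidef,
      hgram_det, hgram_qpow, hgram_qpow, qpow_add hΘ,
      mul_rpow (inv_nonneg.2 hD.le) hy.1.det_pos.le, mul_rpow (inv_nonneg.2 hD.le) hy.2.det_pos.le]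
    have hexp : Θ.det ^ (((m : ℝ) + 1) / 2) * Θ.det ^ (-((ν + n - (m : ℝ) + 1) / 2 - 1)) =
        Θ.det⁻¹ ^ ((n - (m : ℝ) + 1) / 2 - 1) * Θ.det⁻¹ ^ ((ν - (m : ℝ) + 1) / 2 - 1) := by
      rw [inv_rpow hD.le, inv_rpow hD.le, ← rpow_neg hD.le, ← rpow_neg hD.le, ← rpow_add hD,
        ← rpow_add hD]
      ring_nf
    linear_combination (-((Bm m (ν / 2) κ (n / 2) τ)⁻¹ * (qpow κ Θ)⁻¹ * (qpow τ Θ)⁻¹ *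
      C.det ^ ((n - (m : ℝ) + 1) / 2 - 1) * (Θ - C).det ^ ((ν - (m : ℝ) + 1) / 2 - 1) *
      qpow κ (Θ - C) * qpow τ C)) * hexp
  · rw [Set.indicator_of_notMem (show symCongr w y ∉ _ by simpa [hX, hcompl, hposDef] using hy),
      Set.indicator_of_notMem (show y ∉ _ from hy), mul_zero]

theorem c_beta_riesz_scaled_general {Ω : Type*} [MeasurableSpace Ω]
    (μ : Measure Ω)
    {m : ℕ} (ν n : ℝ) (κ τ : Fin m → ℝ)
    (B : Ω → SymIdx m → ℝ) (hBm : Measurable B)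
    (hBlaw : μ.map B =
      volume.withDensity fun x => ENNReal.ofReal (cbetaDens m ν n κ τ x))
    (u : Matrix (Fin m) (Fin m) ℝ) (hu : u.BlockTriangular id)
    (hΘ : (uᵀ * u).PosDef) :
    μ.map (fun ω (p : SymIdx m) => (uᵀ * symOf (B ω) * u) p.1.1 p.1.2) =
      (volume.withDensity fun x =>
        ENNReal.ofReal (Set.indicator
          {x : SymIdx m → ℝ | (symOf x).PosDef ∧ (uᵀ * u - symOf x).PosDef}
          (fun x =>
            (Bm m (ν / 2) κ (n / 2) τ)⁻¹ *
              (uᵀ * u).det ^ (-((ν + n - (m : ℝ) + 1) / 2 - 1)) *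
              (qpow (κ + τ) (uᵀ * u))⁻¹ *
              (symOf x).det ^ ((n - (m : ℝ) + 1) / 2 - 1) *
              (uᵀ * u - symOf x).det ^ ((ν - (m : ℝ) + 1) / 2 - 1) *
              qpow κ (uᵀ * u - symOf x) * qpow τ (symOf x)) x)) := by
  let e := symCongrEquiv u (isUnit_det_of_posDef_transpose_mul_self hΘ)
  have he : Measurable e := (LinearMap.continuous_of_finiteDimensional (symCongr u)).measurable
  change μ.map (e ∘ B) = volume.withDensity fun y =>
    ENNReal.ofReal (scaledCbetaDens m ν n κ τ (uᵀ * u) y)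
  rw [← Measure.map_map he hBm, hBlaw, map_linearEquiv_withDensity]
  refine congrArg _ (funext fun y => ?_)
  rw [← ENNReal.ofReal_mul (inv_nonneg.2 (abs_nonneg _))]
  change ENNReal.ofReal (|LinearMap.det (symCongr u)|⁻¹ * cbetaDens m ν n κ τ (symCongr u⁻¹ y)) = _
  rw [cbetaDens_symCongr_inv hu hΘ, abs_det_symCongr hu,
    inv_mul_cancel_left₀ (rpow_pos_of_pos hΘ.det_pos _).ne']

/-- if `B` has the c-beta-Riesz type I density and
`Θ = u(Θ)ᵀ u(Θ)` is positive definite with upper triangular Cholesky factor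
`u(Θ)`, then `C = u(Θ)ᵀ B u(Θ)` has the stated (non-standardised) density. -/
theorem c_beta_riesz_scaled {Ω : Type*} [MeasurableSpace Ω]
    (μ : Measure Ω) [IsProbabilityMeasure μ]
    {m : ℕ} (hm : 0 < m) (ν n : ℝ) (κ τ : Fin m → ℝ)
    (B : Ω → SymIdx m → ℝ) (hBm : Measurable B)
    (hBlaw : μ.map B =
      volume.withDensity fun x => ENNReal.ofReal (cbetaDens m ν n κ τ x))
    (u : Matrix (Fin m) (Fin m) ℝ) (hu : u.BlockTriangular id)
    (hud : ∀ i, 0 < u i i) (hΘ : (uᵀ * u).PosDef) :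
    μ.map (fun ω (p : SymIdx m) => (uᵀ * symOf (B ω) * u) p.1.1 p.1.2) =
      (volume.withDensity fun x =>
        ENNReal.ofReal (Set.indicator
          {x : SymIdx m → ℝ | (symOf x).PosDef ∧ (uᵀ * u - symOf x).PosDef}
          (fun x =>
            (Bm m (ν / 2) κ (n / 2) τ)⁻¹ *
              (uᵀ * u).det ^ (-((ν + n - (m : ℝ) + 1) / 2 - 1)) *
              (qpow (κ + τ) (uᵀ * u))⁻¹ *
              (symOf x).det ^ ((n - (m : ℝ) + 1) / 2 - 1) *
              (uᵀ * u - symOf x).det ^ ((ν - (m : ℝ) + 1) / 2 - 1) *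
              qpow κ (uᵀ * u - symOf x) * qpow τ (symOf x)) x)) :=
  c_beta_riesz_scaled_general μ ν n κ τ B hBm hBlaw u hu hΘ

end
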